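/- There is an injective group homomorphism from the presented group P₆ = ⟨x, y | x⁶, y³, (xy)²⟩ into the group of affine isometries of the Euclidean plane sending x to a(v) = R_{π/3} v and y to b(v) = R_{2π/3} v + (1/2, 1/(2√3)); i.e., this assignment defines a faithful representation of π₁^orb(S²(2,3,6)) into Isom(E²). -/

import Mathlib

/-!
The generator `x` acts as the rotation `a` by `π/3` about the origin and `y` as the rotation `b`
by `2π/3` about `(1/3, 0)`. The words `u = y x⁻²` and `w = x u x⁻¹` go to the translations by
`c = (1/2, √3/6)` and by `R_{π/3} c`, two independent vectors. The relators alone imply that `u`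
and `w` commute and that conjugation by `x` maps `⟨u, w⟩` into itself, so every element of `P₆`
is `u^m w^n x^k`. Its image is the rotation by `kπ/3` followed by the translation by
`m c + n R_{π/3} c`, and this is the identity only when `m = n = 0` and `6 ∣ k`, i.e. when the
element is trivial.
-/
open Real

/-- The Euclidean plane `E²`. -/
abbrev E2 : Type := EuclideanSpace ℝ (Fin 2)

/-- The vector `(x, y)` of the Euclidean plane. -/
def vecE (x y : ℝ) : E2 := WithLp.toLp 2 ![x, y]

/-- Rotation of the Euclidean plane:
`R_θ(x,y) = (x cos θ + y sin θ, −x sin θ + y cos θ)`. -/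
noncomputable def rotE (θ : ℝ) (v : E2) : E2 :=
  vecE (v 0 * Real.cos θ + v 1 * Real.sin θ) (-v 0 * Real.sin θ + v 1 * Real.cos θ)

/-- Relators of `P₆ = ⟨x, y | x⁶, y³, (xy)²⟩`, the fundamental group of `S²(2,3,6)`. -/
def relsP6 : Set (FreeGroup (Fin 2)) :=
  {(FreeGroup.of 0) ^ 6, (FreeGroup.of 1) ^ 3, (FreeGroup.of 0 * FreeGroup.of 1) ^ 2}

/-- `P₆ = ⟨x, y | x⁶, y³, (xy)²⟩`. -/
abbrev P6 : Type := PresentedGroup relsP6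

noncomputable section

lemma E2_ext {v w : E2} (h0 : v 0 = w 0) (h1 : v 1 = w 1) : v = w :=
  PiLp.ext fun i => by fin_cases i <;> assumption

@[simp] lemma vecE_apply_zero (x y : ℝ) : vecE x y 0 = x := rfl
@[simp] lemma vecE_apply_one (x y : ℝ) : vecE x y 1 = y := rfl

@[simp] lemma rotE_apply_zero (θ : ℝ) (v : E2) :
    rotE θ v 0 = v 0 * cos θ + v 1 * sin θ := rfl
@[simp] lemma rotE_apply_one (θ : ℝ) (v : E2) :
    rotE θ v 1 = -v 0 * sin θ + v 1 * cos θ := rfl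

lemma rotE_rotE (θ θ' : ℝ) (v : E2) : rotE θ (rotE θ' v) = rotE (θ + θ') v := by
  apply E2_ext <;> simp only [rotE_apply_zero, rotE_apply_one, cos_add, sin_add] <;> ring

@[simp] lemma rotE_zero (v : E2) : rotE 0 v = v := by
  apply E2_ext <;> simp

@[simp] lemma rotE_zero_vec (θ : ℝ) : rotE θ 0 = 0 := by
  apply E2_ext <;> simp

lemma rotE_add (θ : ℝ) (u v : E2) : rotE θ (u + v) = rotE θ u + rotE θ v := by
  apply E2_ext <;> simp only [rotE_apply_zero, rotE_apply_one, PiLp.add_apply] <;> ring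

lemma dist_rotE (θ : ℝ) (u v : E2) : dist (rotE θ u) (rotE θ v) = dist u v := by
  simp only [EuclideanSpace.dist_eq, Fin.sum_univ_two, rotE_apply_zero, rotE_apply_one,
    Real.dist_eq, sq_abs]
  congr 1
  linear_combination ((u 0 - v 0) ^ 2 + (u 1 - v 1) ^ 2) * sin_sq_add_cos_sq θ

def rotIso (θ : ℝ) : E2 ≃ᵢ E2 where
  toFun := rotE θ
  invFun := rotE (-θ)
  left_inv v := by simp [rotE_rotE]
  right_inv v := by simp [rotE_rotE]
  isometry_toFun := Isometry.of_dist_eq (dist_rotE θ)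

def rotHom : Multiplicative ℝ →* (E2 ≃ᵢ E2) where
  toFun θ := rotIso θ.toAdd
  map_one' := IsometryEquiv.ext rotE_zero
  map_mul' _ _ := IsometryEquiv.ext fun v => (rotE_rotE _ _ v).symm

@[simp] lemma rotHom_apply (θ : Multiplicative ℝ) (v : E2) : rotHom θ v = rotE θ.toAdd v := rfl

lemma rotHom_eq_one_iff (θ : ℝ) : rotHom (.ofAdd θ) = 1 ↔ ∃ j : ℤ, j * (2 * π) = θ := by
  constructor
  · intro h
    rw [← cos_eq_one_iff]
    simpa using congrArg (fun e : E2 ≃ᵢ E2 => e (vecE 1 0) 0) h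
  · rintro ⟨j, rfl⟩
    ext v i
    fin_cases i <;> simp [cos_int_mul_two_pi, sin_periodic.int_mul_eq]

def translHom : Multiplicative E2 →* (E2 ≃ᵢ E2) where
  toFun d := IsometryEquiv.addRight d.toAdd
  map_one' := IsometryEquiv.ext fun v => add_zero v
  map_mul' d d' := IsometryEquiv.ext fun v => by
    simp only [toAdd_mul, IsometryEquiv.addRight_apply, IsometryEquiv.mul_apply]; abel

@[simp] lemma translHom_apply (d : Multiplicative E2) (v : E2) : translHom d v = v + d.toAdd := rfl

lemma rotHom_mul_translHom (θ : Multiplicative ℝ) (d : Multiplicative E2) :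
    rotHom θ * translHom d = translHom (.ofAdd (rotE θ.toAdd d.toAdd)) * rotHom θ :=
  IsometryEquiv.ext fun v => by simp [rotE_add]

lemma eq_one_of_translHom_mul_rotHom_eq_one {d : Multiplicative E2} {θ : Multiplicative ℝ}
    (h : translHom d * rotHom θ = 1) : d = 1 ∧ rotHom θ = 1 := by
  have hd : d = 1 := by simpa using congrArg (fun e : E2 ≃ᵢ E2 => e 0) h
  subst hd
  simpa using h

lemma cos_two_pi_div_three : cos (2 * π / 3) = -(1 / 2) := by
  rw [show 2 * π / 3 = π - π / 3 by ring, cos_pi_sub, cos_pi_div_three]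

lemma sin_two_pi_div_three : sin (2 * π / 3) = √3 / 2 := by
  rw [show 2 * π / 3 = π - π / 3 by ring, sin_pi_sub, sin_pi_div_three]

lemma rotHom_pow_eq_one {n : ℕ} {θ : ℝ} (h : n * θ = 2 * π) : rotHom (.ofAdd θ) ^ n = 1 := by
  rw [← map_pow, ← ofAdd_nsmul, rotHom_eq_one_iff, nsmul_eq_mul]
  exact ⟨1, by rw [h]; push_cast; ring⟩

lemma one_div_two_mul_sqrt_three : 1 / (2 * √3) = √3 / 6 := by
  field_simp
  rw [Real.sq_sqrt (by norm_num)]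
  norm_num

def transVec : E2 := vecE (1 / 2) (√3 / 6)

def isomA : E2 ≃ᵢ E2 := rotHom (.ofAdd (π / 3))

def isomB : E2 ≃ᵢ E2 := translHom (.ofAdd transVec) * rotHom (.ofAdd (2 * π / 3))

lemma isomA_pow_six : isomA ^ 6 = 1 :=
  rotHom_pow_eq_one (by ring)

lemma isomB_eq_conj :
    isomB = translHom (.ofAdd (vecE (1 / 3) 0)) * rotHom (.ofAdd (2 * π / 3)) *
      (translHom (.ofAdd (vecE (1 / 3) 0)))⁻¹ := by
  rw [isomB, mul_assoc, ← map_inv, rotHom_mul_translHom, ← mul_assoc, ← map_mul]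
  congr
  apply E2_ext <;>
    simp only [transVec, toAdd_ofAdd, toAdd_inv, PiLp.add_apply, PiLp.neg_apply, vecE_apply_zero,
      vecE_apply_one, rotE_apply_zero, rotE_apply_one, cos_two_pi_div_three,
      sin_two_pi_div_three] <;>
    ring

lemma isomB_pow_three : isomB ^ 3 = 1 := by
  rw [isomB_eq_conj, conj_pow, rotHom_pow_eq_one (by ring), mul_one, mul_inv_cancel]

lemma translHom_mul_rotHom_pi_sq (d : Multiplicative E2) :
    (translHom d * rotHom (.ofAdd π)) ^ 2 = 1 := by
  ext v i
  fin_cases i <;> simp [sq]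

lemma isomA_mul_isomB_sq : (isomA * isomB) ^ 2 = 1 := by
  rw [isomA, isomB, ← mul_assoc, rotHom_mul_translHom, mul_assoc, ← map_mul, ← ofAdd_add,
    show π / 3 + 2 * π / 3 = π by ring]
  exact translHom_mul_rotHom_pi_sq _

namespace P6

def X : P6 := PresentedGroup.of 0
def Y : P6 := PresentedGroup.of 1
def U : P6 := Y * X⁻¹ * X⁻¹
def W : P6 := X * U * X⁻¹

lemma X_pow_six : X ^ 6 = 1 := by
  rw [X, PresentedGroup.of, ← map_pow]
  exact PresentedGroup.one_of_mem (by simp [relsP6])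

lemma Y_pow_three : Y ^ 3 = 1 := by
  rw [Y, PresentedGroup.of, ← map_pow]
  exact PresentedGroup.one_of_mem (by simp [relsP6])

lemma X_mul_Y_sq : (X * Y) ^ 2 = 1 := by
  rw [X, Y, PresentedGroup.of, PresentedGroup.of, ← map_mul, ← map_pow]
  exact PresentedGroup.one_of_mem (by simp [relsP6])

lemma X_mul_Y_mul_X : X * Y * X = Y⁻¹ :=
  eq_inv_of_mul_eq_one_left (by rw [← X_mul_Y_sq, sq]; group)

lemma Y_mul_X_mul_Y : Y * X * Y = X⁻¹ :=
  eq_inv_of_mul_eq_one_right (by rw [← X_mul_Y_sq, sq]; group)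

lemma Y_inv : Y⁻¹ = Y * Y :=
  inv_eq_of_mul_eq_one_right (by rw [← Y_pow_three, pow_three])

lemma commute_U_W : Commute U W :=
  calc U * W = Y * (Y * X * Y) * Y * X⁻¹ ^ 3 := by rw [Y_mul_X_mul_Y]; simp only [U, W]; group
    _ = (X * Y * X) * X * (X * Y * X) * X⁻¹ ^ 3 := by rw [X_mul_Y_mul_X, Y_inv]; group
    _ = X * Y * X⁻¹ ^ 3 * X ^ 6 * Y * X⁻¹ ^ 2 := by
      simp only [pow_succ, pow_zero, one_mul, mul_assoc, mul_inv_cancel_left, inv_mul_cancel_left]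
    _ = X * Y * X⁻¹ ^ 3 * Y * X⁻¹ ^ 2 := by rw [X_pow_six, mul_one]
    _ = W * U := by simp only [U, W]; group

lemma X_mul_W_mul_X_inv : X * W * X⁻¹ = W * U⁻¹ :=
  calc X * W * X⁻¹ = X * (X * Y * X) * X * (X ^ 6)⁻¹ := by simp only [W, U]; group
    _ = X * (Y * Y) * X := by rw [X_mul_Y_mul_X, X_pow_six, Y_inv]; group
    _ = X * Y * X⁻¹ * (X * Y * X) := by group
    _ = W * U⁻¹ := by rw [X_mul_Y_mul_X]; simp only [W, U]; group

lemma X_mul_lattice (m n : ℤ) : X * (U ^ m * W ^ n) = U ^ (-n) * W ^ (m + n) * X :=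
  calc X * (U ^ m * W ^ n) = (X * U * X⁻¹) ^ m * (X * W * X⁻¹) ^ n * X := by
        rw [conj_zpow, conj_zpow]; group
    _ = W ^ m * (W * U⁻¹) ^ n * X := by rw [X_mul_W_mul_X_inv]; rfl
    _ = U ^ (-n) * W ^ (m + n) * X := by
        rw [commute_U_W.symm.inv_right.mul_zpow, inv_zpow', ← mul_assoc, ← zpow_add,
          (commute_U_W.zpow_zpow _ _).eq]

lemma X_inv_mul_lattice (m n : ℤ) : X⁻¹ * (U ^ m * W ^ n) = U ^ (m + n) * W ^ (-m) * X⁻¹ := by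
  rw [inv_mul_eq_iff_eq_mul, ← mul_assoc, X_mul_lattice]
  group

def normalForms : Set P6 := {g | ∃ m n k : ℤ, g = U ^ m * W ^ n * X ^ k}

lemma X_mul_mem_normalForms {g : P6} (hg : g ∈ normalForms) : X * g ∈ normalForms := by
  obtain ⟨m, n, k, rfl⟩ := hg
  exact ⟨-n, m + n, k + 1, by rw [← mul_assoc, X_mul_lattice]; group⟩

lemma X_inv_mul_mem_normalForms {g : P6} (hg : g ∈ normalForms) : X⁻¹ * g ∈ normalForms := by
  obtain ⟨m, n, k, rfl⟩ := hg
  exact ⟨m + n, -m, k - 1, by rw [← mul_assoc, X_inv_mul_lattice]; group⟩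

lemma U_zpow_mul_mem_normalForms (j : ℤ) {g : P6} (hg : g ∈ normalForms) :
    U ^ j * g ∈ normalForms := by
  obtain ⟨m, n, k, rfl⟩ := hg
  exact ⟨j + m, n, k, by group⟩

lemma Y_eq_U_mul_X_mul_X : Y = U * X * X := by
  simp only [U]; group

lemma mem_normalForms (g : P6) : g ∈ normalForms := by
  have hg : g ∈ Subgroup.closure (Set.range PresentedGroup.of) := by simp
  induction hg using Subgroup.closure_induction_left with
  | one => exact ⟨0, 0, 0, by simp⟩
  | mul_left x hx y _ hy =>
    obtain ⟨i, rfl⟩ := hx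
    fin_cases i
    · exact X_mul_mem_normalForms hy
    · change Y * y ∈ normalForms
      rw [Y_eq_U_mul_X_mul_X, mul_assoc, mul_assoc, ← zpow_one U]
      exact U_zpow_mul_mem_normalForms 1 (X_mul_mem_normalForms (X_mul_mem_normalForms hy))
  | inv_mul_cancel x hx y _ hy =>
    obtain ⟨i, rfl⟩ := hx
    fin_cases i
    · exact X_inv_mul_mem_normalForms hy
    · change Y⁻¹ * y ∈ normalForms
      rw [Y_eq_U_mul_X_mul_X, mul_inv_rev, mul_inv_rev, mul_assoc, mul_assoc, ← zpow_neg_one U]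
      exact X_inv_mul_mem_normalForms (X_inv_mul_mem_normalForms
        (U_zpow_mul_mem_normalForms (-1) hy))

lemma lift_isom_rels : ∀ r ∈ relsP6, FreeGroup.lift ![isomA, isomB] r = 1 := by
  simp only [relsP6, Set.mem_insert_iff, Set.mem_singleton_iff]
  rintro r (rfl | rfl | rfl)
  · simpa using isomA_pow_six
  · simpa using isomB_pow_three
  · simpa using isomA_mul_isomB_sq

def toIsom : P6 →* (E2 ≃ᵢ E2) := PresentedGroup.toGroup lift_isom_rels

lemma toIsom_X : toIsom X = isomA := PresentedGroup.toGroup.of lift_isom_rels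

lemma toIsom_Y : toIsom Y = isomB := PresentedGroup.toGroup.of lift_isom_rels

lemma toIsom_U : toIsom U = translHom (.ofAdd transVec) := by
  rw [U, map_mul, map_mul, map_inv, toIsom_X, toIsom_Y, isomA, isomB, ← map_inv, mul_assoc,
    mul_assoc, ← map_mul, ← map_mul, ← ofAdd_neg, ← ofAdd_add, ← ofAdd_add,
    show 2 * π / 3 + (-(π / 3) + -(π / 3)) = 0 by ring, ofAdd_zero, map_one, mul_one]

lemma toIsom_W : toIsom W = translHom (.ofAdd (rotE (π / 3) transVec)) := by
  rw [W, map_mul, map_mul, map_inv, toIsom_U, toIsom_X, isomA, rotHom_mul_translHom,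
    mul_inv_cancel_right]
  rfl

lemma toIsom_normalForm (m n k : ℤ) :
    toIsom (U ^ m * W ^ n * X ^ k) =
      translHom (.ofAdd (m • transVec + n • rotE (π / 3) transVec)) *
        rotHom (.ofAdd (k • (π / 3))) := by
  simp only [map_mul, map_zpow, ofAdd_add, ofAdd_zsmul, toIsom_U, toIsom_W, toIsom_X, isomA]

lemma eq_zero_of_zsmul_transVec_add_zsmul_eq_zero {m n : ℤ}
    (h : m • transVec + n • rotE (π / 3) transVec = 0) : m = 0 ∧ n = 0 := by
  have h0 := congrArg (· 0) h
  have h1 := congrArg (· 1) h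
  simp only [transVec, PiLp.add_apply, PiLp.smul_apply, PiLp.zero_apply, zsmul_eq_mul,
    vecE_apply_zero, vecE_apply_one, rotE_apply_zero, rotE_apply_one, cos_pi_div_three,
    sin_pi_div_three] at h0 h1
  have hs : √3 * √3 = 3 := Real.mul_self_sqrt (by norm_num)
  have hsum : (m : ℝ) + n = 0 := by linear_combination 2 * h0 - (n / 6 : ℝ) * hs
  have hdiff : ((m : ℝ) - n) * √3 = 0 := by linear_combination 6 * h1
  replace hdiff : (m : ℝ) - n = 0 := by simpa using hdiff
  have : m + n = 0 ∧ m - n = 0 := ⟨by exact_mod_cast hsum, by exact_mod_cast hdiff⟩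
  omega

theorem toIsom_injective : Function.Injective toIsom := by
  rw [injective_iff_map_eq_one]
  intro g hg
  obtain ⟨m, n, k, rfl⟩ := mem_normalForms g
  rw [toIsom_normalForm] at hg
  obtain ⟨hd, hθ⟩ := eq_one_of_translHom_mul_rotHom_eq_one hg
  obtain ⟨rfl, rfl⟩ := eq_zero_of_zsmul_transVec_add_zsmul_eq_zero (ofAdd_eq_one.1 hd)
  obtain ⟨j, hj⟩ := (rotHom_eq_one_iff _).1 hθ
  have hk : (k : ℝ) = 6 * j := by
    rw [zsmul_eq_mul] at hj
    have : ((k : ℝ) - 6 * j) * π = 0 := by linear_combination -3 * hj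
    simpa [sub_eq_zero, pi_ne_zero] using this
  replace hk : k = 6 * j := by exact_mod_cast hk
  simp [hk, zpow_mul, X_pow_six]

end P6

end

/-- There is an injective (i.e. faithful) homomorphism `P₆ → Isom(E²)` sending the
generator `x` to `a(v) = R_{π/3} v` and the generator `y` to
`b(v) = R_{2π/3} v + (1/2, 1/(2√3))`. -/
theorem stmt2 :
    ∃ φ : P6 →* (E2 ≃ᵢ E2),
      Function.Injective φ ∧
      (∀ v : E2, φ (PresentedGroup.of 0) v = rotE (π / 3) v) ∧
      (∀ v : E2, φ (PresentedGroup.of 1) v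
          = rotE (2 * π / 3) v + vecE (1 / 2) (1 / (2 * Real.sqrt 3))) := by
  refine ⟨P6.toIsom, P6.toIsom_injective, fun v => ?_, fun v => ?_⟩
  · rw [← P6.X, P6.toIsom_X]; rfl
  · rw [← P6.Y, P6.toIsom_Y, one_div_two_mul_sqrt_three]; rfl
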